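/- arXiv:1907.05991 — 5 statements merged into one kernel-verified Lean document; each statement's English description precedes it below -/
import Mathlib

section
/- Let A: X → Dists(Y), let f be convex with f(1)=0, and let λ₀, λ₁ ∈ Dists(X). For any coupling γ of λ₀ and λ₁, the f-divergence between the lifted output distributions satisfies D_f(A#(λ₀) ‖ A#(λ₁)) ≤ Σ_{(x₀,x₁) ∈ supp(γ)} γ[x₀,x₁] · D_f(A(x₀) ‖ A(x₁)). -/
/-!
Through the coupling both lifted distributions are `γ`-mixtures over the same index set:
`A#(λ₀)[y] = ∑ₚ γ p * A p.1 y` and `A#(λ₁)[y] = ∑ₚ γ p * A p.2 y`. For each `y`, Jensen's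
inequality for the perspective `(a, b) ↦ b * f (a / b)` of `f` bounds the `y`-term of the
divergence by `∑ₚ γ p * A p.2 y * f (A p.1 y / A p.2 y)`; summing over `y` and exchanging the
sums gives the bound.
-/

open Finset

theorem ConvexOn.sum_mul_map_sum_div_le {ι : Type*} {s : Finset ι} {f : ℝ → ℝ}
    (hf : ConvexOn ℝ (Set.Ici 0) f) {a b : ι → ℝ} (ha : ∀ i ∈ s, 0 ≤ a i)
    (hb : ∀ i ∈ s, 0 < b i) :
    (∑ i ∈ s, b i) * f ((∑ i ∈ s, a i) / ∑ i ∈ s, b i) ≤ ∑ i ∈ s, b i * f (a i / b i) := by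
  rcases s.eq_empty_or_nonempty with rfl | hs
  · simp
  have hB : 0 < ∑ i ∈ s, b i := sum_pos hb hs
  have hmass : s.centerMass b (fun i => a i / b i) = (∑ i ∈ s, a i) / ∑ i ∈ s, b i := by
    rw [centerMass, div_eq_inv_mul, smul_eq_mul]
    congr 1
    exact sum_congr rfl fun i hi => mul_div_cancel₀ _ (hb i hi).ne'
  have hjensen := hf.map_centerMass_le (fun i hi => (hb i hi).le) hB
    fun i hi => Set.mem_Ici.mpr (div_nonneg (ha i hi) (hb i hi).le)
  rw [hmass, centerMass, smul_eq_mul, le_inv_mul_iff₀ hB] at hjensen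
  simpa only [smul_eq_mul, Function.comp_apply] using hjensen

theorem Finset.sum_mul_eq_sum_filter_pos {ι : Type*} [Fintype ι] {γ : ι → ℝ}
    (hγ : ∀ p, 0 ≤ γ p) (g : ι → ℝ) :
    ∑ p, γ p * g p = ∑ p ∈ univ.filter (fun p => 0 < γ p), γ p * g p :=
  (sum_filter_of_ne fun p _ h => (hγ p).lt_of_ne' (left_ne_zero_of_mul h)).symm

theorem stmt3_general {X Y : Type*} [Fintype X] [Fintype Y]
    (A : X → Y → ℝ)
    (hA0 : ∀ x y, 0 < A x y)
    (f : ℝ → ℝ) (hconv : ConvexOn ℝ (Set.Ici 0) f)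
    (l₀ l₁ : X → ℝ)
    (γ : X × X → ℝ) (hγ0 : ∀ p, 0 ≤ γ p)
    (hm0 : ∀ x₀, l₀ x₀ = ∑ x₁, γ (x₀, x₁))
    (hm1 : ∀ x₁, l₁ x₁ = ∑ x₀, γ (x₀, x₁)) :
    ∑ y, (∑ x, l₁ x * A x y) *
        f ((∑ x, l₀ x * A x y) / (∑ x, l₁ x * A x y))
      ≤ ∑ p ∈ Finset.univ.filter (fun p : X × X => 0 < γ p),
          γ p * ∑ y, A p.2 y * f (A p.1 y / A p.2 y) := by
  set S := univ.filter fun p : X × X => 0 < γ p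
  have hS : ∀ p ∈ S, 0 < γ p := fun p hp => (mem_filter.mp hp).2
  have lift₀ : ∀ y, ∑ x, l₀ x * A x y = ∑ p ∈ S, γ p * A p.1 y := fun y => by
    rw [← sum_mul_eq_sum_filter_pos hγ0, Fintype.sum_prod_type]
    simp only [hm0, sum_mul]
  have lift₁ : ∀ y, ∑ x, l₁ x * A x y = ∑ p ∈ S, γ p * A p.2 y := fun y => by
    rw [← sum_mul_eq_sum_filter_pos hγ0, Fintype.sum_prod_type_right]
    simp only [hm1, sum_mul]
  calc _ ≤ ∑ y, ∑ p ∈ S, γ p * A p.2 y * f (γ p * A p.1 y / (γ p * A p.2 y)) :=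
        sum_le_sum fun y _ => by
          rw [lift₀, lift₁]
          exact hconv.sum_mul_map_sum_div_le (fun p hp => (mul_pos (hS p hp) (hA0 _ _)).le)
            fun p hp => mul_pos (hS p hp) (hA0 _ _)
    _ = _ := by
        rw [sum_comm]
        refine sum_congr rfl fun p hp => ?_
        rw [mul_sum]
        refine sum_congr rfl fun y _ => ?_
        rw [mul_div_mul_left _ _ (hS p hp).ne', mul_assoc]

/-- The f-divergence of lifted outputs is bounded by the coupling-average of
pointwise f-divergences. -/
theorem stmt3 {X Y : Type*} [Fintype X] [Fintype Y]
    (A : X → Y → ℝ)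
    (hA0 : ∀ x y, 0 < A x y) (hA1 : ∀ x, ∑ y, A x y = 1)
    (f : ℝ → ℝ) (hconv : ConvexOn ℝ (Set.Ici 0) f)
    (hfnonneg : ∀ t, 0 ≤ t → 0 ≤ f t) (hf1 : f 1 = 0)
    (l₀ l₁ : X → ℝ)
    (hl₀0 : ∀ x, 0 ≤ l₀ x) (hl₀1 : ∑ x, l₀ x = 1)
    (hl₁0 : ∀ x, 0 ≤ l₁ x) (hl₁1 : ∑ x, l₁ x = 1)
    (γ : X × X → ℝ) (hγ0 : ∀ p, 0 ≤ γ p)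
    (hm0 : ∀ x₀, l₀ x₀ = ∑ x₁, γ (x₀, x₁))
    (hm1 : ∀ x₁, l₁ x₁ = ∑ x₀, γ (x₀, x₁)) :
    ∑ y, (∑ x, l₁ x * A x y) *
        f ((∑ x, l₀ x * A x y) / (∑ x, l₁ x * A x y))
      ≤ ∑ p ∈ Finset.univ.filter (fun p : X × X => 0 < γ p),
          γ p * ∑ y, A p.2 y * f (A p.1 y / A p.2 y) :=
  stmt3_general A hA0 f hconv l₀ l₁ γ hγ0 hm0 hm1
end

section
/- If a randomized algorithm A: X → Dists(Y) provides (ε, D_f)-DP with respect to an adjacency relation Φ (i.e., D_f(A(x)‖A(x')) ≤ ε and D_f(A(x')‖A(x)) ≤ ε for all (x,x') ∈ Φ), then for any pair of distributions (λ₀, λ₁) admitting a coupling γ with supp(γ) ⊆ Φ, we have D_f(A#(λ₀)‖A#(λ₁)) ≤ ε, i.e., A provides (ε, D_f)-distribution privacy with respect to the lifting of Φ. -/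
/-!
Both mixtures are marginals of the same coupling `γ`: `A#(λ₀) = ∑ₚ γ p • A p.1` and
`A#(λ₁) = ∑ₚ γ p • A p.2`. The f-divergence is jointly convex, because each of its terms
`ν * f (μ / ν)` is the perspective of `f`, so the divergence of the mixtures is at most the
`γ`-average of `D_f(A p.1 ‖ A p.2)`, which is `≤ ε` on the support of `γ ⊆ Φ`.
-/

open Finset

theorem ConvexOn.sum_mul_map_div_le {ι : Type*} {s : Finset ι} {f : ℝ → ℝ}
    (hf : ConvexOn ℝ (Set.Ici 0) f) {a b : ι → ℝ} (ha : ∀ i ∈ s, 0 ≤ a i)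
    (hb : ∀ i ∈ s, 0 ≤ b i) (hab : ∀ i ∈ s, b i = 0 → a i = 0) :
    (∑ i ∈ s, b i) * f ((∑ i ∈ s, a i) / ∑ i ∈ s, b i) ≤ ∑ i ∈ s, b i * f (a i / b i) := by
  rcases (sum_nonneg hb).eq_or_lt with hzero | hpos
  · have hb0 : ∀ i ∈ s, b i = 0 := (sum_eq_zero_iff_of_nonneg hb).mp hzero.symm
    rw [← hzero, zero_mul]
    exact (sum_eq_zero fun i hi => by rw [hb0 i hi, zero_mul]).ge
  have hsum : ∑ i ∈ s, b i * (a i / b i) = ∑ i ∈ s, a i := by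
    refine sum_congr rfl fun i hi => ?_
    rcases eq_or_ne (b i) 0 with h | h
    · simp [h, hab i hi h]
    · exact mul_div_cancel₀ _ h
  have key := hf.map_centerMass_le hb hpos fun i hi =>
    Set.mem_Ici.mpr (div_nonneg (ha i hi) (hb i hi))
  simp only [centerMass, smul_eq_mul, Function.comp_apply, hsum] at key
  rwa [div_eq_inv_mul, ← le_inv_mul_iff₀ hpos]

noncomputable def fDiv {Y : Type*} [Fintype Y] (f : ℝ → ℝ) (μ ν : Y → ℝ) : ℝ :=
  ∑ y, ν y * f (μ y / ν y)

theorem fDiv_sum_le {ι Y : Type*} [Fintype Y] {s : Finset ι} {f : ℝ → ℝ}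
    (hf : ConvexOn ℝ (Set.Ici 0) f) {w : ι → ℝ} {μ ν : ι → Y → ℝ} (hw : ∀ i ∈ s, 0 ≤ w i)
    (hμ : ∀ i ∈ s, ∀ y, 0 ≤ μ i y) (hν : ∀ i ∈ s, ∀ y, 0 ≤ ν i y)
    (hμν : ∀ i ∈ s, ∀ y, ν i y = 0 → μ i y = 0) :
    fDiv f (fun y => ∑ i ∈ s, w i * μ i y) (fun y => ∑ i ∈ s, w i * ν i y) ≤
      ∑ i ∈ s, w i * fDiv f (μ i) (ν i) := by
  have hterm : ∀ i y, w i * ν i y * f (w i * μ i y / (w i * ν i y)) =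
      w i * (ν i y * f (μ i y / ν i y)) := fun i y => by
    rcases eq_or_ne (w i) 0 with h | h
    · simp [h]
    · rw [mul_div_mul_left _ _ h, mul_assoc]
  calc fDiv f (fun y => ∑ i ∈ s, w i * μ i y) (fun y => ∑ i ∈ s, w i * ν i y)
      ≤ ∑ y, ∑ i ∈ s, w i * (ν i y * f (μ i y / ν i y)) := by
        refine sum_le_sum fun y _ => ?_
        simp only [← hterm]
        refine hf.sum_mul_map_div_le (fun i hi => mul_nonneg (hw i hi) (hμ i hi y))
          (fun i hi => mul_nonneg (hw i hi) (hν i hi y)) fun i hi h => ?_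
        rcases mul_eq_zero.mp h with h | h
        · rw [h, zero_mul]
        · rw [hμν i hi y h, mul_zero]
    _ = ∑ i ∈ s, w i * fDiv f (μ i) (ν i) := by
        rw [sum_comm]
        simp only [fDiv, mul_sum]

theorem sum_fst_marginal_mul {X₀ X₁ : Type*} [Fintype X₀] [Fintype X₁] {l : X₀ → ℝ}
    {γ : X₀ × X₁ → ℝ} (hl : ∀ x₀, l x₀ = ∑ x₁, γ (x₀, x₁)) (g : X₀ → ℝ) :
    ∑ x, l x * g x = ∑ p, γ p * g p.1 := by
  simp only [hl, sum_mul]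
  exact (Fintype.sum_prod_type fun p => γ p * g p.1).symm

theorem sum_snd_marginal_mul {X₀ X₁ : Type*} [Fintype X₀] [Fintype X₁] {l : X₁ → ℝ}
    {γ : X₀ × X₁ → ℝ} (hl : ∀ x₁, l x₁ = ∑ x₀, γ (x₀, x₁)) (g : X₁ → ℝ) :
    ∑ x, l x * g x = ∑ p, γ p * g p.2 := by
  simp only [hl, sum_mul]
  exact (Fintype.sum_prod_type_right fun p => γ p * g p.2).symm

theorem stmt4_general {X Y : Type*} [Fintype X] [Fintype Y]
    (A : X → Y → ℝ)
    (hA0 : ∀ x y, 0 < A x y)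
    (f : ℝ → ℝ) (hconv : ConvexOn ℝ (Set.Ici 0) f)
    (Φ : Set (X × X)) (ε : ℝ)
    (hDP : ∀ x x', (x, x') ∈ Φ →
        (∑ y, A x' y * f (A x y / A x' y)) ≤ ε ∧
        (∑ y, A x y * f (A x' y / A x y)) ≤ ε) :
    ∀ (l₀ l₁ : X → ℝ),
      (∀ x, 0 ≤ l₀ x) → (∑ x, l₀ x = 1) →
      (∀ x, 0 ≤ l₁ x) → (∑ x, l₁ x = 1) →
      ∀ γ : X × X → ℝ, (∀ p, 0 ≤ γ p) →
        (∀ x₀, l₀ x₀ = ∑ x₁, γ (x₀, x₁)) →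
        (∀ x₁, l₁ x₁ = ∑ x₀, γ (x₀, x₁)) →
        (∀ p, 0 < γ p → p ∈ Φ) →
        ∑ y, (∑ x, l₁ x * A x y) *
            f ((∑ x, l₀ x * A x y) / (∑ x, l₁ x * A x y)) ≤ ε := by
  intro l₀ l₁ _ hl₀1 _ _ γ hγ hm₀ hm₁ hsupp
  have hγ1 : ∑ p, γ p = 1 := by simpa [hl₀1] using (sum_fst_marginal_mul hm₀ fun _ => 1).symm
  calc fDiv f (fun y => ∑ x, l₀ x * A x y) (fun y => ∑ x, l₁ x * A x y)
      = fDiv f (fun y => ∑ p, γ p * A p.1 y) (fun y => ∑ p, γ p * A p.2 y) := by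
        simp only [sum_fst_marginal_mul hm₀, sum_snd_marginal_mul hm₁]
    _ ≤ ∑ p, γ p * fDiv f (A p.1) (A p.2) :=
        fDiv_sum_le hconv (fun p _ => hγ p) (fun p _ y => (hA0 p.1 y).le)
          (fun p _ y => (hA0 p.2 y).le) fun p _ y h => absurd h (hA0 p.2 y).ne'
    _ ≤ ∑ p, γ p * ε := sum_le_sum fun p _ => by
        rcases (hγ p).eq_or_lt with h | h
        · rw [← h, zero_mul, zero_mul]
        · exact mul_le_mul_of_nonneg_left (hDP p.1 p.2 (hsupp p h)).1 h.le
    _ = ε := by rw [← sum_mul, hγ1, one_mul]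

/-- (ε, D_f)-DP implies (ε, D_f)-distribution privacy w.r.t. the lifting of Φ. -/
theorem stmt4 {X Y : Type*} [Fintype X] [Fintype Y]
    (A : X → Y → ℝ)
    (hA0 : ∀ x y, 0 < A x y) (hA1 : ∀ x, ∑ y, A x y = 1)
    (f : ℝ → ℝ) (hconv : ConvexOn ℝ (Set.Ici 0) f)
    (hfnonneg : ∀ t, 0 ≤ t → 0 ≤ f t) (hf1 : f 1 = 0)
    (Φ : Set (X × X)) (ε : ℝ)
    (hDP : ∀ x x', (x, x') ∈ Φ →
        (∑ y, A x' y * f (A x y / A x' y)) ≤ ε ∧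
        (∑ y, A x y * f (A x' y / A x y)) ≤ ε) :
    ∀ (l₀ l₁ : X → ℝ),
      (∀ x, 0 ≤ l₀ x) → (∑ x, l₀ x = 1) →
      (∀ x, 0 ≤ l₁ x) → (∑ x, l₁ x = 1) →
      ∀ γ : X × X → ℝ, (∀ p, 0 ≤ γ p) →
        (∀ x₀, l₀ x₀ = ∑ x₁, γ (x₀, x₁)) →
        (∀ x₁, l₁ x₁ = ∑ x₀, γ (x₀, x₁)) →
        (∀ p, 0 < γ p → p ∈ Φ) →
        ∑ y, (∑ x, l₁ x * A x y) *
            f ((∑ x, l₀ x * A x y) / (∑ x, l₁ x * A x y)) ≤ ε :=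
  stmt4_general A hA0 f hconv Φ ε hDP
end

section
/- Sequential composition with shared input for KL-divergence DP: if A₀: X → Dists(Y₀) satisfies D_KL(A₀(x)‖A₀(x')) ≤ ε₀ for all (x,x') ∈ Φ, and for every y₀ ∈ Y₀ the algorithm A₁(y₀,·): X → Dists(Y₁) satisfies D_KL(A₁(y₀,x)‖A₁(y₀,x')) ≤ ε₁ for all (x,x') ∈ Φ, then the composition B(x)[y₁] = Σ_{y₀} A₀(x)[y₀]·A₁(y₀,x)[y₁] satisfies D_KL(B(x)‖B(x')) ≤ ε₀ + ε₁ for all (x,x') ∈ Φ. -/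
/-!
The output law of the composition is the `y₁`-marginal of the joint law
`A₀(x)[y₀] · A₁(y₀, x)[y₁]`. By the log-sum inequality, marginalising does not increase the KL
divergence, and by the chain rule the KL divergence of the joint laws is
`D_KL(A₀(x) ‖ A₀(x'))` plus the `A₀(x)`-average of `D_KL(A₁(y₀, x) ‖ A₁(y₀, x'))`.
-/

open Finset Real

theorem sum_mul_log_sum_div_sum_le {ι : Type*} (s : Finset ι) (a b : ι → ℝ)
    (ha : ∀ i ∈ s, 0 < a i) (hb : ∀ i ∈ s, 0 < b i) :
    (∑ i ∈ s, a i) * log ((∑ i ∈ s, a i) / ∑ i ∈ s, b i) ≤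
      ∑ i ∈ s, a i * log (a i / b i) := by
  rcases s.eq_empty_or_nonempty with rfl | hs
  · simp
  set A := ∑ i ∈ s, a i
  set B := ∑ i ∈ s, b i
  have hA : 0 < A := sum_pos ha hs
  have hB : 0 < B := sum_pos hb hs
  -- `log t ≥ 1 - t⁻¹` applied to `t = (a i / b i) / (A / B)`
  have key : ∀ i ∈ s, a i - b i * (A / B) ≤ a i * (log (a i / b i) - log (A / B)) := by
    intro i hi
    have hai := ha i hi
    have hbi := hb i hi
    have h := one_sub_inv_le_log_of_pos (div_pos (div_pos hai hbi) (div_pos hA hB))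
    rw [log_div (div_pos hai hbi).ne' (div_pos hA hB).ne'] at h
    calc a i - b i * (A / B) = a i * (1 - (a i / b i / (A / B))⁻¹) := by field_simp
      _ ≤ _ := mul_le_mul_of_nonneg_left h hai.le
  have := sum_le_sum key
  rw [sum_sub_distrib, ← sum_mul, mul_div_cancel₀ _ hB.ne', sub_self] at this
  simp only [mul_sub, sum_sub_distrib, ← sum_mul] at this
  linarith

noncomputable def discreteKL {ι : Type*} [Fintype ι] (p q : ι → ℝ) : ℝ :=
  ∑ i, p i * log (p i / q i)

section discreteKL

variable {ι κ : Type*} [Fintype ι] [Fintype κ]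

theorem discreteKL_sum_le_sum_discreteKL (p q : ι → κ → ℝ)
    (hp : ∀ i j, 0 < p i j) (hq : ∀ i j, 0 < q i j) :
    discreteKL (fun j ↦ ∑ i, p i j) (fun j ↦ ∑ i, q i j) ≤ ∑ i, discreteKL (p i) (q i) := by
  simp only [discreteKL]
  rw [sum_comm]
  exact sum_le_sum fun j _ ↦
    sum_mul_log_sum_div_sum_le _ _ _ (fun i _ ↦ hp i j) (fun i _ ↦ hq i j)

theorem discreteKL_const_mul {a b : ℝ} {r s : κ → ℝ} (ha : 0 < a) (hb : 0 < b)
    (hr : ∀ j, 0 < r j) (hs : ∀ j, 0 < s j) (hr1 : ∑ j, r j = 1) :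
    discreteKL (fun j ↦ a * r j) (fun j ↦ b * s j) = a * log (a / b) + a * discreteKL r s := by
  have hlog : ∀ j, log (a * r j / (b * s j)) = log (a / b) + log (r j / s j) := fun j ↦ by
    rw [mul_div_mul_comm, log_mul (div_pos ha hb).ne' (div_pos (hr j) (hs j)).ne']
  simp only [discreteKL, hlog, mul_add, sum_add_distrib, mul_sum]
  rw [← sum_mul, ← mul_sum, hr1, mul_one]
  congr 1
  exact sum_congr rfl fun j _ ↦ by ring

end discreteKL

/-- Sequential composition with shared input for KL-divergence DP. -/
theorem stmt9 {X Y₀ Y₁ : Type*} [Fintype Y₀] [Fintype Y₁]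
    (A₀ : X → Y₀ → ℝ) (A₁ : Y₀ → X → Y₁ → ℝ)
    (hA₀ : ∀ x y, 0 < A₀ x y) (hA₀1 : ∀ x, ∑ y, A₀ x y = 1)
    (hA₁ : ∀ y₀ x y, 0 < A₁ y₀ x y) (hA₁1 : ∀ y₀ x, ∑ y, A₁ y₀ x y = 1)
    (Φ : Set (X × X)) (ε₀ ε₁ : ℝ)
    (h0 : ∀ x x', (x, x') ∈ Φ →
        ∑ y, A₀ x y * Real.log (A₀ x y / A₀ x' y) ≤ ε₀)
    (h1 : ∀ y₀ x x', (x, x') ∈ Φ →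
        ∑ y, A₁ y₀ x y * Real.log (A₁ y₀ x y / A₁ y₀ x' y) ≤ ε₁) :
    ∀ x x', (x, x') ∈ Φ →
      ∑ y₁, (∑ y₀, A₀ x y₀ * A₁ y₀ x y₁) *
          Real.log ((∑ y₀, A₀ x y₀ * A₁ y₀ x y₁) /
                    (∑ y₀, A₀ x' y₀ * A₁ y₀ x' y₁))
        ≤ ε₀ + ε₁ := by
  intro x x' hxx'
  have h1_avg : ∑ y₀, A₀ x y₀ * discreteKL (A₁ y₀ x) (A₁ y₀ x') ≤ ε₁ :=
    calc ∑ y₀, A₀ x y₀ * discreteKL (A₁ y₀ x) (A₁ y₀ x') ≤ ∑ y₀, A₀ x y₀ * ε₁ :=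
          sum_le_sum fun y₀ _ ↦ mul_le_mul_of_nonneg_left (h1 y₀ x x' hxx') (hA₀ x y₀).le
      _ = ε₁ := by rw [← sum_mul, hA₀1, one_mul]
  calc discreteKL (fun y₁ ↦ ∑ y₀, A₀ x y₀ * A₁ y₀ x y₁) (fun y₁ ↦ ∑ y₀, A₀ x' y₀ * A₁ y₀ x' y₁)
      ≤ ∑ y₀, discreteKL (fun y₁ ↦ A₀ x y₀ * A₁ y₀ x y₁) (fun y₁ ↦ A₀ x' y₀ * A₁ y₀ x' y₁) :=
        discreteKL_sum_le_sum_discreteKL _ _ (fun y₀ y₁ ↦ mul_pos (hA₀ x y₀) (hA₁ y₀ x y₁))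
          (fun y₀ y₁ ↦ mul_pos (hA₀ x' y₀) (hA₁ y₀ x' y₁))
    _ = ∑ y₀, (A₀ x y₀ * log (A₀ x y₀ / A₀ x' y₀) +
          A₀ x y₀ * discreteKL (A₁ y₀ x) (A₁ y₀ x')) :=
        sum_congr rfl fun y₀ _ ↦
          discreteKL_const_mul (hA₀ x y₀) (hA₀ x' y₀) (hA₁ y₀ x) (hA₁ y₀ x') (hA₁1 y₀ x)
    _ = discreteKL (A₀ x) (A₀ x') + ∑ y₀, A₀ x y₀ * discreteKL (A₁ y₀ x) (A₁ y₀ x') :=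
        sum_add_distrib
    _ ≤ ε₀ + ε₁ := add_le_add (h0 x x' hxx') h1_avg
end

section
/- Distribution privacy of the coupling mechanism under approximate knowledge (max-divergence bound): suppose for s ∈ {0,1}, λ_s and λ̂_s are full-support distributions on X with e^{-ε} ≤ λ_s[x]/λ̂_s[x] ≤ e^{ε} for all x, γ_s is a coupling of λ̂_s and μ, and CP_s(x)[y] = γ_s[x,y]/λ̂_s[x]. Then for every subset R ⊆ Y with μ[R] > 0, CP_0#(λ_0)[R] ≤ e^{2ε} · CP_1#(λ_1)[R]. -/
open Finset Real

/-
Pushing λ through the mechanism reweights the coupling by λ[x]/λ̂[x]; since the second marginal of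
every coupling is μ, the max-divergence bounds give e^{-ε} μ[R] ≤ CP_s#(λ_s)[R] ≤ e^{ε} μ[R] for
both s, and the two sides compare within a factor e^{2ε}.
-/

section Reweighting

variable {X Y : Type*} [Fintype X] {μ : Y → ℝ} {γ : X × Y → ℝ} {w : X → ℝ} {c : ℝ}

theorem mul_sum_eq_sum_sum_of_marginal (hμ : ∀ y, μ y = ∑ x, γ (x, y)) (R : Finset Y) :
    c * ∑ y ∈ R, μ y = ∑ x, ∑ y ∈ R, c * γ (x, y) := by
  simp only [hμ, ← Finset.mul_sum]
  rw [Finset.sum_comm]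

theorem sum_sum_weight_mul_le (hγ : ∀ p, 0 ≤ γ p) (hμ : ∀ y, μ y = ∑ x, γ (x, y))
    (hw : ∀ x, w x ≤ c) (R : Finset Y) :
    ∑ x, ∑ y ∈ R, w x * γ (x, y) ≤ c * ∑ y ∈ R, μ y := by
  rw [mul_sum_eq_sum_sum_of_marginal hμ]
  gcongr with x _ y _
  exacts [hγ _, hw x]

theorem le_sum_sum_weight_mul (hγ : ∀ p, 0 ≤ γ p) (hμ : ∀ y, μ y = ∑ x, γ (x, y))
    (hw : ∀ x, c ≤ w x) (R : Finset Y) :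
    c * ∑ y ∈ R, μ y ≤ ∑ x, ∑ y ∈ R, w x * γ (x, y) := by
  rw [mul_sum_eq_sum_sum_of_marginal hμ]
  gcongr with x _ y _
  exacts [hγ _, hw x]

theorem sum_sum_mul_div_eq (l lh : X → ℝ) (R : Finset Y) :
    ∑ x, ∑ y ∈ R, l x * (γ (x, y) / lh x) = ∑ x, ∑ y ∈ R, l x / lh x * γ (x, y) := by
  simp only [mul_div_assoc', div_mul_eq_mul_div]

end Reweighting

theorem stmt14_general {X Y : Type*} [Fintype X]
    (μ : Y → ℝ)
    (ε : ℝ)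
    (l₀ lh₀ l₁ lh₁ : X → ℝ)
    (hratio₀ : ∀ x, Real.exp (-ε) ≤ l₀ x / lh₀ x ∧ l₀ x / lh₀ x ≤ Real.exp ε)
    (hratio₁ : ∀ x, Real.exp (-ε) ≤ l₁ x / lh₁ x ∧ l₁ x / lh₁ x ≤ Real.exp ε)
    (γ₀ γ₁ : X × Y → ℝ) (hγ₀0 : ∀ p, 0 ≤ γ₀ p) (hγ₁0 : ∀ p, 0 ≤ γ₁ p)
    (hγ₀m1 : ∀ y, μ y = ∑ x, γ₀ (x, y))
    (hγ₁m1 : ∀ y, μ y = ∑ x, γ₁ (x, y)) :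
    ∀ R : Finset Y, 0 < ∑ y ∈ R, μ y →
      (∑ x, ∑ y ∈ R, l₀ x * (γ₀ (x, y) / lh₀ x))
        ≤ Real.exp (2 * ε) * ∑ x, ∑ y ∈ R, l₁ x * (γ₁ (x, y) / lh₁ x) := by
  intro R _
  rw [sum_sum_mul_div_eq, sum_sum_mul_div_eq]
  calc ∑ x, ∑ y ∈ R, l₀ x / lh₀ x * γ₀ (x, y)
      ≤ Real.exp ε * ∑ y ∈ R, μ y :=
        sum_sum_weight_mul_le hγ₀0 hγ₀m1 (fun x ↦ (hratio₀ x).2) R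
    _ = Real.exp (2 * ε) * (Real.exp (-ε) * ∑ y ∈ R, μ y) := by
        rw [← mul_assoc, ← Real.exp_add, two_mul, add_neg_cancel_right]
    _ ≤ Real.exp (2 * ε) * ∑ x, ∑ y ∈ R, l₁ x / lh₁ x * γ₁ (x, y) := by
        gcongr
        exact le_sum_sum_weight_mul hγ₁0 hγ₁m1 (fun x ↦ (hratio₁ x).1) R

/-- Max-divergence distribution privacy of the coupling mechanism under
approximate knowledge of the input distributions. -/
theorem stmt14 {X Y : Type*} [Fintype X] [Fintype Y]
    (μ : Y → ℝ) (hμ0 : ∀ y, 0 ≤ μ y) (hμ1 : ∑ y, μ y = 1)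
    (ε : ℝ) (hε : 0 ≤ ε)
    (l₀ lh₀ l₁ lh₁ : X → ℝ)
    (hl₀ : ∀ x, 0 < l₀ x) (hl₀1 : ∑ x, l₀ x = 1)
    (hlh₀ : ∀ x, 0 < lh₀ x) (hlh₀1 : ∑ x, lh₀ x = 1)
    (hl₁ : ∀ x, 0 < l₁ x) (hl₁1 : ∑ x, l₁ x = 1)
    (hlh₁ : ∀ x, 0 < lh₁ x) (hlh₁1 : ∑ x, lh₁ x = 1)
    (hratio₀ : ∀ x, Real.exp (-ε) ≤ l₀ x / lh₀ x ∧ l₀ x / lh₀ x ≤ Real.exp ε)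
    (hratio₁ : ∀ x, Real.exp (-ε) ≤ l₁ x / lh₁ x ∧ l₁ x / lh₁ x ≤ Real.exp ε)
    (γ₀ γ₁ : X × Y → ℝ) (hγ₀0 : ∀ p, 0 ≤ γ₀ p) (hγ₁0 : ∀ p, 0 ≤ γ₁ p)
    (hγ₀m0 : ∀ x, lh₀ x = ∑ y, γ₀ (x, y)) (hγ₀m1 : ∀ y, μ y = ∑ x, γ₀ (x, y))
    (hγ₁m0 : ∀ x, lh₁ x = ∑ y, γ₁ (x, y)) (hγ₁m1 : ∀ y, μ y = ∑ x, γ₁ (x, y)) :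
    ∀ R : Finset Y, 0 < ∑ y ∈ R, μ y →
      (∑ x, ∑ y ∈ R, l₀ x * (γ₀ (x, y) / lh₀ x))
        ≤ Real.exp (2 * ε) * ∑ x, ∑ y ∈ R, l₁ x * (γ₁ (x, y) / lh₁ x) :=
  stmt14_general μ ε l₀ lh₀ l₁ lh₁ hratio₀ hratio₁ γ₀ γ₁ hγ₀0 hγ₁0 hγ₀m1 hγ₁m1
end

section
/- KL distribution privacy of the coupling mechanism: under the assumptions that e^{-ε} ≤ λ_s[x]/λ̂_s[x] ≤ e^{ε} for s ∈ {0,1} and all x, with CP_s(x)[y] = γ_s[x,y]/λ̂_s[x] for couplings γ_s of λ̂_s and μ, the KL divergence satisfies D_KL(CP_0#(λ_0) ‖ CP_1#(λ_1)) ≤ 2ε·e^{ε}. -/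
/-!
Both lifted outputs are squeezed against `μ`: `ν₀ ≤ e^ε μ` and `e^{-ε} μ ≤ ν₁`, because each is
a `γ`-average of likelihood ratios `λ_s / λ̂_s ∈ [e^{-ε}, e^ε]` and `γ` has second marginal `μ`.
Hence `ν₀ ≤ e^{2ε} ν₁` pointwise, every log-ratio in the KL sum is at most `2ε`, and the sum is
at most `2ε ∑ ν₀ ≤ 2ε e^ε ∑ μ = 2ε e^ε`.
-/

open Finset Real

theorem mul_log_div_le_mul_log {a b c : ℝ} (ha : 0 ≤ a) (hc : 0 < c) (hab : a ≤ c * b) :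
    a * log (a / b) ≤ a * log c := by
  rcases ha.eq_or_lt with rfl | ha
  · simp
  have hb : 0 < b := pos_of_mul_pos_right (ha.trans_le hab) hc.le
  exact mul_le_mul_of_nonneg_left
    (log_le_log (div_pos ha hb) ((div_le_iff₀ hb).2 hab)) ha.le

theorem sum_mul_log_div_le_of_exp_bounds {Y : Type*} [Fintype Y] {μ ν₀ ν₁ : Y → ℝ}
    (hμ1 : ∑ y, μ y = 1) {ε : ℝ} (hε : 0 ≤ ε) (hν₀ : ∀ y, 0 ≤ ν₀ y)
    (hν₀μ : ∀ y, ν₀ y ≤ exp ε * μ y) (hμν₁ : ∀ y, exp (-ε) * μ y ≤ ν₁ y) :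
    ∑ y, ν₀ y * log (ν₀ y / ν₁ y) ≤ 2 * ε * exp ε := by
  have hν₀ν₁ (y : Y) : ν₀ y ≤ exp (2 * ε) * ν₁ y :=
    calc ν₀ y ≤ exp ε * μ y := hν₀μ y
      _ = exp (2 * ε) * (exp (-ε) * μ y) := by rw [← mul_assoc, ← exp_add]; ring_nf
      _ ≤ exp (2 * ε) * ν₁ y := mul_le_mul_of_nonneg_left (hμν₁ y) (exp_pos _).le
  calc ∑ y, ν₀ y * log (ν₀ y / ν₁ y) ≤ ∑ y, ν₀ y * (2 * ε) := sum_le_sum fun y _ =>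
        (mul_log_div_le_mul_log (hν₀ y) (exp_pos _) (hν₀ν₁ y)).trans_eq (by rw [log_exp])
    _ ≤ ∑ y, exp ε * μ y * (2 * ε) := sum_le_sum fun y _ =>
        mul_le_mul_of_nonneg_right (hν₀μ y) (by positivity)
    _ = 2 * ε * exp ε := by rw [← sum_mul, ← mul_sum, hμ1]; ring

section LiftedOutput

variable {X Y : Type*} [Fintype X] (l lh : X → ℝ) (γ : X × Y → ℝ) (y : Y)

theorem sum_mul_div_eq_sum_div_mul :
    ∑ x, l x * (γ (x, y) / lh x) = ∑ x, l x / lh x * γ (x, y) :=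
  sum_congr rfl fun x _ => by rw [mul_div_assoc', div_mul_eq_mul_div]

variable {l lh γ}

theorem sum_mul_div_le_of_div_le {C : ℝ} (hC : ∀ x, l x / lh x ≤ C) (hγ : ∀ p, 0 ≤ γ p) :
    ∑ x, l x * (γ (x, y) / lh x) ≤ C * ∑ x, γ (x, y) := by
  rw [sum_mul_div_eq_sum_div_mul, mul_sum]
  exact sum_le_sum fun x _ => mul_le_mul_of_nonneg_right (hC x) (hγ _)

theorem le_sum_mul_div_of_le_div {c : ℝ} (hc : ∀ x, c ≤ l x / lh x) (hγ : ∀ p, 0 ≤ γ p) :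
    c * ∑ x, γ (x, y) ≤ ∑ x, l x * (γ (x, y) / lh x) := by
  rw [sum_mul_div_eq_sum_div_mul, mul_sum]
  exact sum_le_sum fun x _ => mul_le_mul_of_nonneg_right (hc x) (hγ _)

end LiftedOutput

theorem stmt15_general {X Y : Type*} [Fintype X] [Fintype Y]
    (μ : Y → ℝ) (hμ1 : ∑ y, μ y = 1)
    (ε : ℝ) (hε : 0 ≤ ε)
    (l₀ lh₀ l₁ lh₁ : X → ℝ)
    (hratio₀ : ∀ x, Real.exp (-ε) ≤ l₀ x / lh₀ x ∧ l₀ x / lh₀ x ≤ Real.exp ε)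
    (hratio₁ : ∀ x, Real.exp (-ε) ≤ l₁ x / lh₁ x ∧ l₁ x / lh₁ x ≤ Real.exp ε)
    (γ₀ γ₁ : X × Y → ℝ) (hγ₀0 : ∀ p, 0 ≤ γ₀ p) (hγ₁0 : ∀ p, 0 ≤ γ₁ p)
    (hγ₀m1 : ∀ y, μ y = ∑ x, γ₀ (x, y))
    (hγ₁m1 : ∀ y, μ y = ∑ x, γ₁ (x, y)) :
    ∑ y, (∑ x, l₀ x * (γ₀ (x, y) / lh₀ x)) *
        Real.log ((∑ x, l₀ x * (γ₀ (x, y) / lh₀ x)) /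
                  (∑ x, l₁ x * (γ₁ (x, y) / lh₁ x)))
      ≤ 2 * ε * Real.exp ε := by
  refine sum_mul_log_div_le_of_exp_bounds hμ1 hε (fun y => ?_) (fun y => ?_) (fun y => ?_)
  · simpa using le_sum_mul_div_of_le_div y
      (fun x => (exp_pos _).le.trans (hratio₀ x).1) hγ₀0 (c := 0)
  · simpa only [hγ₀m1] using sum_mul_div_le_of_div_le y (fun x => (hratio₀ x).2) hγ₀0
  · simpa only [hγ₁m1] using le_sum_mul_div_of_le_div y (fun x => (hratio₁ x).1) hγ₁0

/-- KL-divergence distribution privacy of the coupling mechanism. -/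
theorem stmt15 {X Y : Type*} [Fintype X] [Fintype Y]
    (μ : Y → ℝ) (hμ0 : ∀ y, 0 < μ y) (hμ1 : ∑ y, μ y = 1)
    (ε : ℝ) (hε : 0 ≤ ε)
    (l₀ lh₀ l₁ lh₁ : X → ℝ)
    (hl₀ : ∀ x, 0 < l₀ x) (hl₀1 : ∑ x, l₀ x = 1)
    (hlh₀ : ∀ x, 0 < lh₀ x) (hlh₀1 : ∑ x, lh₀ x = 1)
    (hl₁ : ∀ x, 0 < l₁ x) (hl₁1 : ∑ x, l₁ x = 1)
    (hlh₁ : ∀ x, 0 < lh₁ x) (hlh₁1 : ∑ x, lh₁ x = 1)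
    (hratio₀ : ∀ x, Real.exp (-ε) ≤ l₀ x / lh₀ x ∧ l₀ x / lh₀ x ≤ Real.exp ε)
    (hratio₁ : ∀ x, Real.exp (-ε) ≤ l₁ x / lh₁ x ∧ l₁ x / lh₁ x ≤ Real.exp ε)
    (γ₀ γ₁ : X × Y → ℝ) (hγ₀0 : ∀ p, 0 ≤ γ₀ p) (hγ₁0 : ∀ p, 0 ≤ γ₁ p)
    (hγ₀m0 : ∀ x, lh₀ x = ∑ y, γ₀ (x, y)) (hγ₀m1 : ∀ y, μ y = ∑ x, γ₀ (x, y))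
    (hγ₁m0 : ∀ x, lh₁ x = ∑ y, γ₁ (x, y)) (hγ₁m1 : ∀ y, μ y = ∑ x, γ₁ (x, y)) :
    ∑ y, (∑ x, l₀ x * (γ₀ (x, y) / lh₀ x)) *
        Real.log ((∑ x, l₀ x * (γ₀ (x, y) / lh₀ x)) /
                  (∑ x, l₁ x * (γ₁ (x, y) / lh₁ x)))
      ≤ 2 * ε * Real.exp ε :=
  stmt15_general μ hμ1 ε hε l₀ lh₀ l₁ lh₁ hratio₀ hratio₁ γ₀ γ₁ hγ₀0 hγ₁0 hγ₀m1 hγ₁m1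
end
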